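/- Let n ≥ 4 be even. Let T be the caterpillar with spine x_1,...,x_{n-1} where each spine edge (x_i, x_{i+1}) has weight 2, leaves v_i and u_i attached to x_i with weight-n edges for 1 ≤ i ≤ n−1, and leaf v_n attached to x_{n/2} with a weight-1 edge. Then PCG(T, 2n−2, 2n+2) equals the graph C_n ⊠ P_2 with the vertex u_n removed. -/

import Mathlib

open SimpleGraph

/-- A tree with positive real edge weights. -/
structure WTree (α : Type) where
  g : SimpleGraph α
  isTree : g.IsTree
  w : α → α → ℝ
  w_symm : ∀ a b, w a b = w b a
  w_pos : ∀ a b, g.Adj a b → 0 < w a b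

/-- The weighted distance between two vertices of a weighted tree: the sum of
the weights of the edges on the unique path between them. -/
noncomputable def WTree.dist {α : Type} (T : WTree α) (u v : α) : ℝ :=
  (((T.isTree.existsUnique_path u v).exists.choose).darts.map
    (fun d => T.w d.toProd.1 d.toProd.2)).sum

/-- A vertex of a weighted tree is a leaf if it has exactly one neighbor. -/
def WTree.IsLeaf {α : Type} (T : WTree α) (v : α) : Prop :=
  ∃! u, T.g.Adj v u

/-- `G = PCG(T, dmin, dmax)` via the leaf-assignment `f`. -/
def IsPCGWith {V β : Type} (G : SimpleGraph V) (T : WTree β) (f : V → β)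
    (dmin dmax : ℝ) : Prop :=
  Function.Injective f ∧ (∀ v, T.IsLeaf (f v)) ∧ (∀ b, T.IsLeaf b → ∃ v, f v = b) ∧
    ∀ u v : V, u ≠ v →
      (G.Adj u v ↔ dmin ≤ T.dist (f u) (f v) ∧ T.dist (f u) (f v) ≤ dmax)

/-- A graph is a pairwise compatibility graph. -/
def IsPCG {V : Type} (G : SimpleGraph V) : Prop :=
  ∃ (β : Type) (T : WTree β) (f : V → β) (dmin dmax : ℝ),
    0 ≤ dmin ∧ dmin ≤ dmax ∧ IsPCGWith G T f dmin dmax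

/-- The strong product `C_n ⊠ P_2`: vertices `(i, s)` with `s : Fin 2`
(`u_i = (i, 0)`, `v_i = (i, 1)`), adjacent iff distinct and the first
coordinates are equal or consecutive modulo `n`. -/
def strongProdC2 (n : ℕ) : SimpleGraph (Fin n × Fin 2) where
  Adj x y := x ≠ y ∧ (x.1 = y.1 ∨ (x.1.val + 1) % n = y.1.val ∨
    (y.1.val + 1) % n = x.1.val)
  symm := by
    constructor
    rintro x y ⟨hne, h⟩
    refine ⟨hne.symm, ?_⟩
    rcases h with h | h | h
    · exact Or.inl h.symm
    · exact Or.inr (Or.inr h)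
    · exact Or.inr (Or.inl h)
  loopless := ⟨fun x h => h.1 rfl⟩

/-- Vertices of the caterpillar for even `n`: spine nodes `x_{i+1} = .inl i`,
leaves `u_{i+1} = .inr (.inl i)`, `v_{i+1} = .inr (.inr (.inl i))` for
`i : Fin (n-1)`, and the extra leaf `v_n = .inr (.inr (.inr ()))`. -/
abbrev CatVE (n : ℕ) := Fin (n - 1) ⊕ (Fin (n - 1) ⊕ (Fin (n - 1) ⊕ Unit))

/-- Edges of the caterpillar (even case): consecutive spine nodes, each `u_i`
and `v_i` attached to `x_i`, and `v_n` attached to `x_{n/2}`. -/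
def catRelE (n : ℕ) : CatVE n → CatVE n → Prop := fun a b =>
  match a, b with
  | .inl i, .inl j => i.val + 1 = j.val
  | .inr (.inl i), .inl j => i = j
  | .inr (.inr (.inl i)), .inl j => i = j
  | .inr (.inr (.inr _)), .inl j => j.val + 1 = n / 2
  | _, _ => False

/-- The caterpillar tree graph for the even case. -/
def catGraphE (n : ℕ) : SimpleGraph (CatVE n) := SimpleGraph.fromRel (catRelE n)

/-- Edge weights for the even caterpillar: spine edges weigh `2`, the edge to
`v_n` weighs `1`, and the edges to the leaves `u_i, v_i` weigh `n`. -/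
def catWE (n : ℕ) : CatVE n → CatVE n → ℝ := fun a b =>
  match a, b with
  | .inl _, .inl _ => 2
  | .inr (.inr (.inr _)), _ => 1
  | _, .inr (.inr (.inr _)) => 1
  | _, _ => (n : ℝ)

/-- The assignment of the vertices of `C_n ⊠ P_2` (minus `u_n`) to the leaves
of the even caterpillar: `u_{i+1} = (i,0) ↦ .inr (.inl i)`,
`v_{i+1} = (i,1) ↦ .inr (.inr (.inl i))` for `i < n-1`, and
`v_n = (n-1,1) ↦ .inr (.inr (.inr ()))`. -/
def leafMapE (n : ℕ) : Fin n × Fin 2 → CatVE n := fun p =>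
  if h : p.1.val < n - 1 then
    if p.2 = 0 then .inr (.inl ⟨p.1.val, h⟩) else .inr (.inr (.inl ⟨p.1.val, h⟩))
  else .inr (.inr (.inr ()))


/-!
Every leaf `a` of the caterpillar hangs from a spine node `x_{s(a)}` by a pendant edge of weight
`w(a)`, so two distinct leaves are at distance `w(a) + w(b) + 2 |s(a) - s(b)|`. For the leaves
`u_i, v_j` (`i, j < n`) this is `2n + 2 |i - j|`, which lies in `[2n - 2, 2n + 2]` iff
`|i - j| ≤ 1`. The leaf `v_n` hangs from `x_{n/2}` with weight `1`, at distance
`n + 1 + 2 |i - n/2|` from `u_i, v_i`. Since `n` is even, this lies in the window iff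
`|i - n/2| ∈ {n/2 - 1, n/2}`, i.e. iff `i = 1` or `i = n - 1`: exactly the cycle neighbours
of `v_n`.
-/

lemma Nat.add_one_mod_eq_ite {x m : ℕ} (hx : x < m) :
    (x + 1) % m = if x + 1 = m then 0 else x + 1 := by
  split_ifs with h
  · simp [h]
  · exact Nat.mod_eq_of_lt (by omega)

namespace SimpleGraph.Walk

variable {α : Type*} {G : SimpleGraph α} {u v x : α}

def weight (w : α → α → ℝ) (p : G.Walk u v) : ℝ :=
  (p.darts.map fun d => w d.toProd.1 d.toProd.2).sum

variable (w : α → α → ℝ)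

@[simp] lemma weight_nil : (nil : G.Walk u u).weight w = 0 := rfl

@[simp] lemma weight_cons (h : G.Adj u v) (p : G.Walk v x) :
    (cons h p).weight w = w u v + p.weight w := by
  simp [weight]

@[simp] lemma weight_concat (p : G.Walk u v) (h : G.Adj v x) :
    (p.concat h).weight w = p.weight w + w v x := by
  simp [weight, darts_concat]

lemma weight_reverse (hw : ∀ a b, w a b = w b a) (p : G.Walk u v) :
    p.reverse.weight w = p.weight w := by
  simp [weight, darts_reverse, List.sum_reverse, Function.comp_def, hw]

end SimpleGraph.Walk

namespace WTree

variable {α : Type} (T : WTree α)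

lemma dist_eq_weight {u v : α} {p : T.g.Walk u v} (hp : p.IsPath) :
    T.dist u v = p.weight T.w := by
  have h := T.isTree.existsUnique_path u v
  rw [WTree.dist, h.unique h.exists.choose_spec hp]
  rfl

lemma dist_comm (u v : α) : T.dist u v = T.dist v u := by
  obtain ⟨p, hp⟩ := (T.isTree.existsUnique_path u v).exists
  rw [T.dist_eq_weight hp, T.dist_eq_weight hp.reverse, Walk.weight_reverse _ T.w_symm]

end WTree

section Caterpillar

variable {n : ℕ}

/-- The 0-based index of the spine node a vertex hangs from: `a` is attached to
`.inl ⟨spinePos n a, _⟩`, i.e. to `x_{spinePos n a + 1}`. -/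
def spinePos (n : ℕ) : CatVE n → ℕ
  | .inl i | .inr (.inl i) | .inr (.inr (.inl i)) => i
  | .inr (.inr (.inr _)) => n / 2 - 1

def pendantWeight (n : ℕ) : CatVE n → ℕ
  | .inr (.inr (.inr _)) => 1
  | _ => n

lemma spinePos_lt (hn : 2 ≤ n) (a : CatVE n) : spinePos n a < n - 1 := by
  rcases a with i | i | i | u
  · exact i.isLt
  · exact i.isLt
  · exact i.isLt
  · simp only [spinePos]
    omega

lemma catGraphE_adj_spine_succ (i : ℕ) (h : i + 1 < n - 1) :
    (catGraphE n).Adj (.inl ⟨i, by omega⟩) (.inl ⟨i + 1, h⟩) :=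
  ⟨by simp, Or.inl rfl⟩

lemma catGraphE_adj_spinePos (hn : 2 ≤ n) {a : CatVE n} (ha : a.isRight) :
    (catGraphE n).Adj a (.inl ⟨spinePos n a, spinePos_lt hn a⟩) := by
  rcases a with i | i | i | u
  · simp at ha
  · exact ⟨by simp, Or.inl rfl⟩
  · exact ⟨by simp, Or.inl rfl⟩
  · exact ⟨by simp, Or.inl (by simp only [catRelE, spinePos]; omega)⟩

lemma eq_spinePos_of_catGraphE_adj (hn : 2 ≤ n) {a b : CatVE n} (ha : a.isRight)
    (hab : (catGraphE n).Adj a b) : b = .inl ⟨spinePos n a, spinePos_lt hn a⟩ := by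
  obtain ⟨-, h | h⟩ := hab <;> rcases a with i | i | i | u <;> rcases b with j | j | j | v <;>
    simp only [catRelE] at h
  all_goals first | (simp only [spinePos, Sum.inl.injEq, Fin.ext_iff]; omega) | simp at ha

lemma catWE_isRight_inl {a : CatVE n} (ha : a.isRight) (j : Fin (n - 1)) :
    catWE n a (.inl j) = pendantWeight n a := by
  rcases a with i | i | i | u <;> simp_all [catWE, pendantWeight]

lemma catWE_inl_isRight {a : CatVE n} (ha : a.isRight) (j : Fin (n - 1)) :
    catWE n (.inl j) a = pendantWeight n a := by
  rcases a with i | i | i | u <;> simp_all [catWE, pendantWeight]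

lemma isLeaf_iff_isRight (hn : 2 ≤ n) (T : WTree (CatVE n)) (hg : T.g = catGraphE n)
    (a : CatVE n) : T.IsLeaf a ↔ a.isRight := by
  rw [WTree.IsLeaf, hg]
  refine ⟨?_, fun ha =>
    ⟨_, catGraphE_adj_spinePos hn ha, fun _ => eq_spinePos_of_catGraphE_adj hn ha⟩⟩
  rintro ⟨b, -, huniq⟩
  rcases a with i | a
  · -- a spine node carries the two pendant leaves `u_i` and `v_i`
    have hu := huniq _ (catGraphE_adj_spinePos hn (a := .inr (.inl i)) rfl).symm
    have hv := huniq _ (catGraphE_adj_spinePos hn (a := .inr (.inr (.inl i))) rfl).symm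
    simp [← hv] at hu
  · rfl

def spineWalk (n i : ℕ) : (k : ℕ) → (h : i + k < n - 1) →
    (catGraphE n).Walk (.inl ⟨i, by omega⟩) (.inl ⟨i + k, h⟩)
  | 0, _ => .nil
  | k + 1, h => (spineWalk n i k (by omega)).concat (catGraphE_adj_spine_succ (i + k) h)

lemma mem_support_spineWalk {i k : ℕ} {h : i + k < n - 1} {a : CatVE n}
    (ha : a ∈ (spineWalk n i k h).support) :
    ∃ j : Fin (n - 1), j.val ≤ i + k ∧ a = .inl j := by
  induction k with
  | zero =>
    rw [spineWalk, Walk.support_nil, List.mem_singleton] at ha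
    exact ⟨_, le_rfl, ha⟩
  | succ k ih =>
    rw [spineWalk, Walk.support_concat, List.mem_append, List.mem_singleton] at ha
    rcases ha with ha | rfl
    · obtain ⟨j, hj, rfl⟩ := ih ha
      exact ⟨j, by omega, rfl⟩
    · exact ⟨_, le_rfl, rfl⟩

lemma spineWalk_isPath (i k : ℕ) (h : i + k < n - 1) : (spineWalk n i k h).IsPath := by
  induction k with
  | zero => exact Walk.IsPath.nil
  | succ k ih =>
    refine (ih _).concat (fun hmem => ?_) _
    obtain ⟨j, hj, hj'⟩ := mem_support_spineWalk hmem
    simp only [Sum.inl.injEq, Fin.ext_iff] at hj'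
    omega

lemma weight_spineWalk (i k : ℕ) (h : i + k < n - 1) :
    (spineWalk n i k h).weight (catWE n) = 2 * k := by
  induction k with
  | zero => simp [spineWalk]
  | succ k ih =>
    simp only [spineWalk, Walk.weight_concat, ih, catWE]
    push_cast
    ring

lemma notMem_support_spineWalk {i k : ℕ} {h : i + k < n - 1} {a : CatVE n} (ha : a.isRight) :
    a ∉ (spineWalk n i k h).support := by
  rintro hmem
  obtain ⟨j, -, rfl⟩ := mem_support_spineWalk hmem
  simp at ha

def catDist (n : ℕ) (a b : CatVE n) : ℕ :=
  pendantWeight n a + pendantWeight n b + 2 * Nat.dist (spinePos n a) (spinePos n b)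

lemma dist_eq_catDist (hn : 2 ≤ n) (T : WTree (CatVE n)) (hg : T.g = catGraphE n)
    (hw : T.w = catWE n) {a b : CatVE n} (ha : a.isRight) (hb : b.isRight) (hab : a ≠ b) :
    T.dist a b = catDist n a b := by
  wlog hle : spinePos n a ≤ spinePos n b generalizing a b
  · rw [T.dist_comm, this hb ha hab.symm (by omega), catDist, catDist, Nat.dist_comm,
      add_comm (pendantWeight n b)]
  obtain ⟨k, hk⟩ := Nat.exists_eq_add_of_le hle
  have hkb : spinePos n a + k < n - 1 := hk ▸ spinePos_lt hn b
  have hb' : (catGraphE n).Adj (.inl ⟨spinePos n a + k, hkb⟩) b := by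
    have : (⟨spinePos n a + k, hkb⟩ : Fin (n - 1)) = ⟨spinePos n b, spinePos_lt hn b⟩ :=
      Fin.ext hk.symm
    exact this ▸ (catGraphE_adj_spinePos hn hb).symm
  let p : (catGraphE n).Walk a b :=
    .cons (catGraphE_adj_spinePos hn ha) ((spineWalk n _ k hkb).concat hb')
  have hp : p.IsPath := by
    refine ((spineWalk_isPath _ k hkb).concat (notMem_support_spineWalk hb) hb').cons ?_
    rw [Walk.support_concat, List.mem_append, List.mem_singleton]
    exact not_or.2 ⟨notMem_support_spineWalk ha, hab⟩
  have hdist : Nat.dist (spinePos n a) (spinePos n b) = k := by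
    rw [hk, Nat.dist]; omega
  obtain ⟨g, hT, w, hsymm, hpos⟩ := T
  dsimp only at hg hw
  subst hg hw
  rw [WTree.dist_eq_weight _ hp]
  simp only [p, Walk.weight_cons, Walk.weight_concat, weight_spineWalk, catWE_isRight_inl ha,
    catWE_inl_isRight hb, catDist, hdist]
  push_cast
  ring

lemma spinePos_leafMapE (p : Fin n × Fin 2) :
    spinePos n (leafMapE n p) = if p.1.val < n - 1 then p.1.val else n / 2 - 1 := by
  unfold leafMapE
  split_ifs <;> rfl

lemma pendantWeight_leafMapE (p : Fin n × Fin 2) :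
    pendantWeight n (leafMapE n p) = if p.1.val < n - 1 then n else 1 := by
  unfold leafMapE
  split_ifs <;> rfl

lemma leafMapE_injOn (hn : 0 < n) :
    Set.InjOn (leafMapE n) {p | p ≠ ((⟨n - 1, by omega⟩ : Fin n), (0 : Fin 2))} := by
  rintro ⟨i, s⟩ hp ⟨j, t⟩ hq h
  simp only [Set.mem_ofPred_eq, ne_eq, Prod.mk.injEq, Fin.ext_iff] at hp hq
  simp only [leafMapE] at h
  split_ifs at h <;> simp only [Sum.inr.injEq, Sum.inl.injEq, Fin.mk.injEq, reduceCtorEq] at h <;>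
    apply Prod.ext <;> simp only [Fin.ext_iff] at * <;> omega

lemma leafMapE_isRight (p : Fin n × Fin 2) : (leafMapE n p).isRight := by
  unfold leafMapE
  split_ifs <;> rfl

lemma exists_leafMapE_eq (hn : 0 < n) {a : CatVE n} (ha : a.isRight) :
    ∃ p ≠ ((⟨n - 1, by omega⟩ : Fin n), (0 : Fin 2)), leafMapE n p = a := by
  rcases a with i | i | i | u
  · simp at ha
  · exact ⟨(⟨i, by omega⟩, 0), by simp only [ne_eq, Prod.mk.injEq, Fin.ext_iff]; omega,
      by simp [leafMapE]⟩
  · exact ⟨(⟨i, by omega⟩, 1), by simp, by simp [leafMapE]⟩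
  · exact ⟨(⟨n - 1, by omega⟩, 1), by simp, by simp [leafMapE]⟩

lemma strongProdC2_adj_iff_catDist (hn : 0 < n) (hev : Even n) {p q : Fin n × Fin 2}
    (hp : p ≠ ((⟨n - 1, by omega⟩ : Fin n), (0 : Fin 2)))
    (hq : q ≠ ((⟨n - 1, by omega⟩ : Fin n), (0 : Fin 2))) (hpq : p ≠ q) :
    (strongProdC2 n).Adj p q ↔
      2 * n ≤ catDist n (leafMapE n p) (leafMapE n q) + 2 ∧
        catDist n (leafMapE n p) (leafMapE n q) ≤ 2 * n + 2 := by
  obtain ⟨⟨i, hi⟩, s⟩ := p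
  obtain ⟨⟨j, hj⟩, t⟩ := q
  obtain ⟨m, rfl⟩ := hev
  simp only [ne_eq, Prod.mk.injEq, Fin.ext_iff] at hp hq hpq
  simp only [strongProdC2, catDist, spinePos_leafMapE, pendantWeight_leafMapE, Nat.dist,
    Nat.add_one_mod_eq_ite hi, Nat.add_one_mod_eq_ite hj, ne_eq, Prod.mk.injEq, Fin.ext_iff]
  split_ifs <;> omega

end Caterpillar

theorem caterpillar_even_pcg (n : ℕ) (hn : 4 ≤ n) (hev : Even n)
    (T : WTree (CatVE n)) (hg : T.g = catGraphE n) (hw : T.w = catWE n) :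
    IsPCGWith ((strongProdC2 n).induce {p | p ≠ ((⟨n - 1, by omega⟩ : Fin n), (0 : Fin 2))})
      T (fun p => leafMapE n p.1) (2 * (n : ℝ) - 2) (2 * (n : ℝ) + 2) := by
  have hleaf := isLeaf_iff_isRight (by omega) T hg
  have hinj := leafMapE_injOn (n := n) (by omega)
  refine ⟨hinj.injective, fun p => (hleaf _).2 (leafMapE_isRight p.1), fun b hb => ?_, ?_⟩
  · obtain ⟨p, hp, rfl⟩ := exists_leafMapE_eq (by omega) ((hleaf b).1 hb)
    exact ⟨⟨p, hp⟩, rfl⟩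
  · rintro ⟨p, hp⟩ ⟨q, hq⟩ hpq
    have hpq' : p ≠ q := fun h => hpq (Subtype.ext h)
    rw [SimpleGraph.induce_adj, strongProdC2_adj_iff_catDist (by omega) hev hp hq hpq',
      dist_eq_catDist (by omega) T hg hw (leafMapE_isRight p) (leafMapE_isRight q)
        (hinj.ne hp hq hpq'), sub_le_iff_le_add]
    norm_cast
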